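/- arXiv:quant-ph/0205100 — 3 statements merged into one kernel-verified Lean document; each statement's English description precedes it below -/
import Mathlib

section
/- Let α = (α₁,α₂,α₃) be a real 3-vector with α₁ ≥ α₂ ≥ |α₃| and α₁ > 0. Then min( inf{ t ≥ 0 : t·α ≻_s (π/4, π/4, π/4) }, inf{ t ≥ 0 : t·α ≻_s (π/4, π/4, −π/4) } ) = (3π/4)/(α₁ + α₂ + |α₃|), and the infimum is attained; moreover the first infimum is the smaller one when α₃ > 0 and the second is the smaller one when α₃ < 0. (Interaction cost of the SWAP gate, whose interaction content is (π/4, π/4, π/4) with the shifted alternative (π/4, π/4, −π/4).) -/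
/-!
For `t ≥ 0` the vector `t • α` is already in s-ordered form, and so are both targets, so
s-majorization reduces to three linear inequalities in `t`. Of these only the one on
`α₁ + α₂ ± α₃` binds, so each feasible set is the ray `[3π/4 / (α₁ + α₂ ± α₃), ∞)`, and the
smaller threshold is the one with the larger denominator `α₁ + α₂ + |α₃|`.
-/

open Matrix Complex Real NormedSpace

noncomputable section

/-- Pauli matrix `σ₁`. -/
def σ1 : Matrix (Fin 2) (Fin 2) ℂ := !![0, 1; 1, 0]
/-- Pauli matrix `σ₂`. -/
def σ2 : Matrix (Fin 2) (Fin 2) ℂ := !![0, -I; I, 0]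
/-- Pauli matrix `σ₃`. -/
def σ3 : Matrix (Fin 2) (Fin 2) ℂ := !![1, 0; 0, -1]

/-- Kronecker product of two `2×2` matrices as a `4×4` matrix, with the index ordering
`|00⟩,|01⟩,|10⟩,|11⟩` (i.e. index `2*i+j` corresponds to `|i⟩⊗|j⟩`). -/
def kron (A B : Matrix (Fin 2) (Fin 2) ℂ) : Matrix (Fin 4) (Fin 4) ℂ :=
  Matrix.of fun i j =>
    A ⟨i.val / 2, by have := i.isLt; omega⟩ ⟨j.val / 2, by have := j.isLt; omega⟩ *
      B ⟨i.val % 2, by have := i.isLt; omega⟩ ⟨j.val % 2, by have := j.isLt; omega⟩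

/-- The Hamiltonian `H_α = α₁ σ₁⊗σ₁ + α₂ σ₂⊗σ₂ + α₃ σ₃⊗σ₃`. -/
def Hmat (a : Fin 3 → ℝ) : Matrix (Fin 4) (Fin 4) ℂ :=
  (a 0 : ℂ) • kron σ1 σ1 + (a 1 : ℂ) • kron σ2 σ2 + (a 2 : ℂ) • kron σ3 σ3

/-- The magic basis matrix: column `j` is the `j`-th magic basis vector, written in the
computational basis `|00⟩,|01⟩,|10⟩,|11⟩`. -/
def Mmag : Matrix (Fin 4) (Fin 4) ℂ :=
  !![0,                      1 / (Real.sqrt 2 : ℂ), -I / (Real.sqrt 2 : ℂ), 0;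
     -I / (Real.sqrt 2 : ℂ), 0,                     0,                      1 / (Real.sqrt 2 : ℂ);
     -I / (Real.sqrt 2 : ℂ), 0,                     0,                      -(1 / (Real.sqrt 2 : ℂ));
     0,                      1 / (Real.sqrt 2 : ℂ), I / (Real.sqrt 2 : ℂ),  0]

/-- `λ(α) = (α₁+α₂−α₃, α₁−α₂+α₃, −α₁+α₂+α₃, −α₁−α₂−α₃)`, the vector of eigenvalues of `H_α`
in the magic basis. -/
def lamv (a : Fin 3 → ℝ) : Fin 4 → ℝ :=
  ![a 0 + a 1 - a 2, a 0 - a 1 + a 2, -a 0 + a 1 + a 2, -a 0 - a 1 - a 2]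

/-- The s-ordered form of a real 3-vector: the absolute values rearranged in nonincreasing
order, with the third component carrying the sign of the product `v₀v₁v₂`. -/
def sOrd (v : Fin 3 → ℝ) : Fin 3 → ℝ :=
  ![max |v 0| (max |v 1| |v 2|),
    |v 0| + |v 1| + |v 2| - max |v 0| (max |v 1| |v 2|) - min |v 0| (min |v 1| |v 2|),
    if v 0 * v 1 * v 2 < 0 then -(min |v 0| (min |v 1| |v 2|))
    else min |v 0| (min |v 1| |v 2|)]

/-- `x` s-majorizes `y`, written for the s-ordered forms:
`x^s₁ ≥ y^s₁`, `x^s₁+x^s₂−x^s₃ ≥ y^s₁+y^s₂−y^s₃` and `x^s₁+x^s₂+x^s₃ ≥ y^s₁+y^s₂+y^s₃`. -/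
def sMaj (x y : Fin 3 → ℝ) : Prop :=
  sOrd y 0 ≤ sOrd x 0 ∧
    sOrd y 0 + sOrd y 1 - sOrd y 2 ≤ sOrd x 0 + sOrd x 1 - sOrd x 2 ∧
    sOrd y 0 + sOrd y 1 + sOrd y 2 ≤ sOrd x 0 + sOrd x 1 + sOrd x 2

def IsSOrdered (v : Fin 3 → ℝ) : Prop :=
  v 1 ≤ v 0 ∧ |v 2| ≤ v 1

lemma IsSOrdered.smul {v : Fin 3 → ℝ} (hv : IsSOrdered v) {t : ℝ} (ht : 0 ≤ t) :
    IsSOrdered (t • v) := by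
  refine ⟨mul_le_mul_of_nonneg_left hv.1 ht, ?_⟩
  simp only [Pi.smul_apply, smul_eq_mul, abs_mul, abs_of_nonneg ht]
  exact mul_le_mul_of_nonneg_left hv.2 ht

lemma isSOrdered_const {p : ℝ} (hp : 0 ≤ p) : IsSOrdered ![p, p, p] := by
  simp [IsSOrdered, abs_of_nonneg hp]

lemma isSOrdered_const_neg {p : ℝ} (hp : 0 ≤ p) : IsSOrdered ![p, p, -p] := by
  simp [IsSOrdered, abs_of_nonneg hp]

lemma sOrd_of_isSOrdered {v : Fin 3 → ℝ} (hv : IsSOrdered v) : sOrd v = v := by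
  obtain ⟨h10, h21⟩ := hv
  have h1 : 0 ≤ v 1 := (abs_nonneg _).trans h21
  have hmax : max |v 0| (max |v 1| |v 2|) = v 0 := by
    rw [abs_of_nonneg h1, abs_of_nonneg (h1.trans h10), max_eq_left h21, max_eq_left h10]
  have hmin : min |v 0| (min |v 1| |v 2|) = |v 2| := by
    rw [abs_of_nonneg h1, abs_of_nonneg (h1.trans h10), min_eq_right h21,
      min_eq_right (h21.trans h10)]
  -- a negative `v₃` forces `v₂ > 0`, so the sign of `v₁v₂v₃` is that of `v₃`
  have hsign : v 0 * v 1 * v 2 < 0 ↔ v 2 < 0 := by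
    constructor
    · intro h
      by_contra! h2
      exact h.not_ge (mul_nonneg (mul_nonneg (h1.trans h10) h1) h2)
    · intro h2
      have h1' : 0 < v 1 := (abs_pos.mpr h2.ne).trans_le h21
      exact mul_neg_of_pos_of_neg (mul_pos (h1'.trans_le h10) h1') h2
  ext i
  fin_cases i
  · simp [sOrd, hmax]
  · show sOrd v 1 = v 1
    simp only [sOrd, Matrix.cons_val]
    rw [hmax, hmin, abs_of_nonneg h1, abs_of_nonneg (h1.trans h10)]
    ring
  · simp only [sOrd, hmin, hsign, Fin.reduceFinMk, Matrix.cons_val]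
    split_ifs with h2
    · rw [abs_of_neg h2, neg_neg]
    · exact abs_of_nonneg (not_lt.mp h2)

lemma sMaj_iff_of_isSOrdered {x y : Fin 3 → ℝ} (hx : IsSOrdered x) (hy : IsSOrdered y) :
    sMaj x y ↔ y 0 ≤ x 0 ∧ y 0 + y 1 - y 2 ≤ x 0 + x 1 - x 2 ∧
      y 0 + y 1 + y 2 ≤ x 0 + x 1 + x 2 := by
  rw [sMaj, sOrd_of_isSOrdered hx, sOrd_of_isSOrdered hy]

section Threshold

variable {α : Fin 3 → ℝ} (hα : IsSOrdered α) {p : ℝ} (hp : 0 ≤ p) {t : ℝ} (ht : 0 ≤ t)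
include hα hp ht

lemma sMaj_smul_const_iff :
    sMaj (t • α) ![p, p, p] ↔ 3 * p ≤ t * (α 0 + α 1 + α 2) := by
  have hbound := abs_le.mp hα.2
  have h10 := hα.1
  rw [sMaj_iff_of_isSOrdered (hα.smul ht) (isSOrdered_const hp)]
  simp only [Pi.smul_apply, smul_eq_mul, Matrix.cons_val]
  have hle₀ := mul_le_mul_of_nonneg_left (show α 0 + α 1 + α 2 ≤ 3 * α 0 by linarith) ht
  have hle₁ := mul_le_mul_of_nonneg_left
    (show α 0 + α 1 + α 2 ≤ 3 * (α 0 + α 1 - α 2) by linarith) ht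
  constructor
  · rintro ⟨-, -, h⟩
    linarith
  · intro h
    refine ⟨?_, ?_, ?_⟩ <;> linarith

lemma sMaj_smul_const_neg_iff :
    sMaj (t • α) ![p, p, -p] ↔ 3 * p ≤ t * (α 0 + α 1 - α 2) := by
  have hbound := abs_le.mp hα.2
  have h10 := hα.1
  rw [sMaj_iff_of_isSOrdered (hα.smul ht) (isSOrdered_const_neg hp)]
  simp only [Pi.smul_apply, smul_eq_mul, Matrix.cons_val]
  have hle₀ := mul_le_mul_of_nonneg_left (show α 0 + α 1 - α 2 ≤ 3 * α 0 by linarith) ht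
  have hle₁ := mul_le_mul_of_nonneg_left
    (show α 0 + α 1 - α 2 ≤ 3 * (α 0 + α 1 + α 2) by linarith) ht
  constructor
  · rintro ⟨-, h, -⟩
    linarith
  · intro h
    refine ⟨?_, ?_, ?_⟩ <;> linarith

end Threshold

lemma setOf_nonneg_and_eq_Ici {P : ℝ → Prop} {c s : ℝ} (hc : 0 ≤ c) (hs : 0 < s)
    (hP : ∀ t, 0 ≤ t → (P t ↔ c ≤ t * s)) : {t | 0 ≤ t ∧ P t} = Set.Ici (c / s) := by
  ext t
  rw [Set.mem_Ici, div_le_iff₀ hs]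
  constructor
  · rintro ⟨ht, hPt⟩
    exact (hP t ht).1 hPt
  · intro h
    have ht : 0 ≤ t := nonneg_of_mul_nonneg_left (hc.trans h) hs
    exact ⟨ht, (hP t ht).2 h⟩

theorem stmt14 (α : Fin 3 → ℝ)
    (ha1 : α 1 ≤ α 0) (ha2 : |α 2| ≤ α 1) (ha0 : 0 < α 0) :
    min (sInf { t : ℝ | 0 ≤ t ∧ sMaj (t • α) ![π / 4, π / 4, π / 4] })
        (sInf { t : ℝ | 0 ≤ t ∧ sMaj (t • α) ![π / 4, π / 4, -(π / 4)] }) =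
      3 * π / 4 / (α 0 + α 1 + |α 2|) ∧
    (3 * π / 4 / (α 0 + α 1 + |α 2|) ∈
      { t : ℝ | 0 ≤ t ∧ sMaj (t • α) ![π / 4, π / 4, π / 4] } ∪
      { t : ℝ | 0 ≤ t ∧ sMaj (t • α) ![π / 4, π / 4, -(π / 4)] }) ∧
    (0 < α 2 →
      sInf { t : ℝ | 0 ≤ t ∧ sMaj (t • α) ![π / 4, π / 4, π / 4] } <
        sInf { t : ℝ | 0 ≤ t ∧ sMaj (t • α) ![π / 4, π / 4, -(π / 4)] }) ∧
    (α 2 < 0 →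
      sInf { t : ℝ | 0 ≤ t ∧ sMaj (t • α) ![π / 4, π / 4, -(π / 4)] } <
        sInf { t : ℝ | 0 ≤ t ∧ sMaj (t • α) ![π / 4, π / 4, π / 4] }) := by
  have hα : IsSOrdered α := ⟨ha1, ha2⟩
  have hp : 0 ≤ π / 4 := by positivity
  have hc : 0 < 3 * (π / 4) := by positivity
  have hbound := abs_le.mp ha2
  have hA : 0 < α 0 + α 1 + α 2 := by linarith
  have hB : 0 < α 0 + α 1 - α 2 := by linarith
  rw [setOf_nonneg_and_eq_Ici hc.le hA fun t ht ↦ sMaj_smul_const_iff hα hp ht,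
    setOf_nonneg_and_eq_Ici hc.le hB fun t ht ↦ sMaj_smul_const_neg_iff hα hp ht,
    csInf_Ici, csInf_Ici, show 3 * π / 4 = 3 * (π / 4) by ring]
  rcases le_total 0 (α 2) with hα2 | hα2
  · have hBA : α 0 + α 1 - α 2 ≤ α 0 + α 1 + α 2 := by linarith
    rw [abs_of_nonneg hα2]
    exact ⟨min_eq_left (div_le_div_of_nonneg_left hc.le hB hBA), Or.inl (Set.mem_Ici.2 le_rfl),
      fun h ↦ (div_lt_div_iff_of_pos_left hc hA hB).2 (by linarith), fun h ↦ absurd h hα2.not_gt⟩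
  · have hAB : α 0 + α 1 + α 2 ≤ α 0 + α 1 - α 2 := by linarith
    rw [abs_of_nonpos hα2, ← sub_eq_add_neg]
    exact ⟨min_eq_right (div_le_div_of_nonneg_left hc.le hA hAB), Or.inr (Set.mem_Ici.2 le_rfl),
      fun h ↦ absurd h hα2.not_gt, fun h ↦ (div_lt_div_iff_of_pos_left hc hB hA).2 (by linarith)⟩
end
end

section
/- There exist 2×2 unitary matrices A, B, C, D such that CNOT = (A ⊗ B) · exp(−i (π/4) σ₁⊗σ₁) · (C ⊗ D). (The CNOT gate is locally equivalent to the gate with interaction content (π/4, 0, 0).) -/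
open Matrix Complex Real NormedSpace

noncomputable section

/-!
Since `(σ₁⊗σ₁)² = 1`, the exponential series splits into even and odd parts and
`exp (-iθ σ₁⊗σ₁) = cos θ - i sin θ σ₁⊗σ₁`; at `θ = π/4` this is `(1 - i σ₁⊗σ₁)/√2`.
Conjugating by `H⊗H` turns it into `e^{-iπ/4} diag(1, i, i, 1)`, which `S†⊗S†` turns into the
controlled-`Z` gate up to the phase, and `CNOT = (1⊗H) CZ (1⊗H)`. Collecting the local factors
gives `A = e^{iπ/4} S† H`, `B = H S† H`, `C = H`, `D = 1`.
-/

theorem exp_smul_of_mul_self_eq_one {𝔸 : Type*} [NormedRing 𝔸] [NormedAlgebra ℂ 𝔸]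
    [CompleteSpace 𝔸] {N : 𝔸} (hN : N * N = 1) (z : ℂ) :
    exp (z • N) = Complex.cosh z • (1 : 𝔸) + Complex.sinh z • N := by
  have hpow (n : ℕ) : N ^ (2 * n) = 1 := by rw [pow_mul, sq, hN, one_pow]
  refine (exp_series_hasSum_exp' (𝕂 := ℂ) (z • N)).unique (HasSum.even_add_odd ?_ ?_)
  · convert (Complex.hasSum_cosh z).smul_const (1 : 𝔸) using 2 with n
    rw [smul_pow, hpow, smul_smul, div_eq_inv_mul]
  · convert (Complex.hasSum_sinh z).smul_const N using 2 with n
    rw [smul_pow, pow_succ N, hpow, one_mul, smul_smul, div_eq_inv_mul]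

-- `exp` does not depend on the norm, so any submultiplicative one on matrices will do.
theorem Matrix.exp_smul_of_mul_self_eq_one {n : Type*} [Fintype n] [DecidableEq n]
    {N : Matrix n n ℂ} (hN : N * N = 1) (z : ℂ) :
    exp (z • N) = Complex.cosh z • (1 : Matrix n n ℂ) + Complex.sinh z • N :=
  open scoped Norms.Operator in _root_.exp_smul_of_mul_self_eq_one hN z

theorem kron_mul (A B C D : Matrix (Fin 2) (Fin 2) ℂ) :
    kron (A * C) (B * D) = kron A B * kron C D := by
  ext i j
  fin_cases i <;> fin_cases j <;>
    simp [kron, Matrix.mul_apply, Fin.sum_univ_four, Fin.sum_univ_two] <;> ring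

theorem kron_one_one : kron 1 1 = 1 := by
  ext i j
  fin_cases i <;> fin_cases j <;> simp [kron, Matrix.one_apply]

theorem kron_smul_left (c : ℂ) (A B : Matrix (Fin 2) (Fin 2) ℂ) :
    kron (c • A) B = c • kron A B := by
  ext i j
  simp [kron, mul_assoc]

theorem kron_eq_entries (A B : Matrix (Fin 2) (Fin 2) ℂ) :
    kron A B =
      !![A 0 0 * B 0 0, A 0 0 * B 0 1, A 0 1 * B 0 0, A 0 1 * B 0 1;
         A 0 0 * B 1 0, A 0 0 * B 1 1, A 0 1 * B 1 0, A 0 1 * B 1 1;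
         A 1 0 * B 0 0, A 1 0 * B 0 1, A 1 1 * B 0 0, A 1 1 * B 0 1;
         A 1 0 * B 1 0, A 1 0 * B 1 1, A 1 1 * B 1 0, A 1 1 * B 1 1] := by
  ext i j
  fin_cases i <;> fin_cases j <;> rfl

theorem σ1_mul_self : σ1 * σ1 = 1 := by
  simp [σ1, Matrix.one_fin_two]

theorem exp_kron_σ1_σ1 :
    exp (-((π / 4 : ℂ) • I • kron σ1 σ1)) = ((√2 / 2 : ℝ) : ℂ) • (1 - I • kron σ1 σ1) := by
  have hK : kron σ1 σ1 * kron σ1 σ1 = 1 := by rw [← kron_mul, σ1_mul_self, kron_one_one]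
  rw [← smul_assoc, smul_eq_mul, ← neg_smul, ← neg_mul, Matrix.exp_smul_of_mul_self_eq_one hK,
    Complex.cosh_mul_I, Complex.sinh_mul_I, Complex.cos_neg, Complex.sin_neg,
    ← Complex.ofReal_ofNat, ← Complex.ofReal_div, ← Complex.ofReal_cos, ← Complex.ofReal_sin,
    Real.cos_pi_div_four, Real.sin_pi_div_four, smul_sub, smul_smul]
  module

def cnot : Matrix (Fin 4) (Fin 4) ℂ := !![1, 0, 0, 0; 0, 1, 0, 0; 0, 0, 0, 1; 0, 0, 1, 0]

theorem ofReal_sqrt_two_div_two_mul_self : ((√2 / 2 : ℝ) : ℂ) * ((√2 / 2 : ℝ) : ℂ) = 1 / 2 := by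
  rw [← Complex.ofReal_mul, div_mul_div_comm, Real.mul_self_sqrt zero_le_two]
  norm_num

def cnotLocalA : Matrix (Fin 2) (Fin 2) ℂ := !![(1 + I) / 2, (1 + I) / 2; (1 - I) / 2, (-1 + I) / 2]

def cnotLocalB : Matrix (Fin 2) (Fin 2) ℂ := !![(1 - I) / 2, (1 + I) / 2; (1 + I) / 2, (1 - I) / 2]

def hadamardGate : Matrix (Fin 2) (Fin 2) ℂ := ((√2 / 2 : ℝ) : ℂ) • !![1, 1; 1, -1]

theorem cnotLocalA_mem_unitaryGroup : cnotLocalA ∈ Matrix.unitaryGroup (Fin 2) ℂ := by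
  rw [Matrix.mem_unitaryGroup_iff']
  ext i j
  fin_cases i <;> fin_cases j <;>
    simp [cnotLocalA, Matrix.mul_apply, map_ofNat, Complex.ext_iff, Complex.div_ofNat_re,
      Complex.div_ofNat_im] <;> norm_num

theorem cnotLocalB_mem_unitaryGroup : cnotLocalB ∈ Matrix.unitaryGroup (Fin 2) ℂ := by
  rw [Matrix.mem_unitaryGroup_iff']
  ext i j
  fin_cases i <;> fin_cases j <;>
    simp [cnotLocalB, Matrix.mul_apply, map_ofNat, Complex.ext_iff, Complex.div_ofNat_re,
      Complex.div_ofNat_im] <;> norm_num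

theorem hadamardGate_mem_unitaryGroup : hadamardGate ∈ Matrix.unitaryGroup (Fin 2) ℂ := by
  rw [hadamardGate, Matrix.mem_unitaryGroup_iff', star_smul, Complex.star_def,
    Complex.conj_ofReal, smul_mul_smul, ofReal_sqrt_two_div_two_mul_self]
  ext i j
  fin_cases i <;> fin_cases j <;> simp [Matrix.mul_apply] <;> norm_num

theorem cnot_eq_kron_mul_exp_mul_kron :
    cnot = kron cnotLocalA cnotLocalB * exp (-((π / 4 : ℂ) • I • kron σ1 σ1)) *
      kron hadamardGate 1 := by
  have hprod : kron cnotLocalA cnotLocalB * (1 - I • kron σ1 σ1) * kron !![1, 1; 1, -1] 1 =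
      (2 : ℂ) • cnot := by
    ext i j
    fin_cases i <;> fin_cases j <;>
      simp [cnotLocalA, cnotLocalB, cnot, kron_eq_entries, σ1, Matrix.mul_apply, Matrix.vecMul,
        dotProduct, Fin.sum_univ_four, Matrix.one_apply, Complex.ext_iff, Complex.div_ofNat_re,
        Complex.div_ofNat_im] <;> norm_num
  rw [exp_kron_σ1_σ1, hadamardGate, kron_smul_left, Matrix.mul_smul, Matrix.mul_smul,
    Matrix.smul_mul, smul_smul, ofReal_sqrt_two_div_two_mul_self, hprod, smul_smul]
  norm_num

theorem stmt16 :
    ∃ A B C D : Matrix (Fin 2) (Fin 2) ℂ,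
      A ∈ Matrix.unitaryGroup (Fin 2) ℂ ∧
      B ∈ Matrix.unitaryGroup (Fin 2) ℂ ∧
      C ∈ Matrix.unitaryGroup (Fin 2) ℂ ∧
      D ∈ Matrix.unitaryGroup (Fin 2) ℂ ∧
      (!![1, 0, 0, 0; 0, 1, 0, 0; 0, 0, 0, 1; 0, 0, 1, 0] : Matrix (Fin 4) (Fin 4) ℂ) =
        kron A B * NormedSpace.exp (-((π / 4 : ℂ) • I • kron σ1 σ1)) * kron C D :=
  ⟨cnotLocalA, cnotLocalB, hadamardGate, 1, cnotLocalA_mem_unitaryGroup,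
    cnotLocalB_mem_unitaryGroup, hadamardGate_mem_unitaryGroup, one_mem _,
    cnot_eq_kron_mul_exp_mul_kron⟩
end
end

section
/- Let A, B, C, D be matrices in SU(2), let α = (α₁,α₂,α₃) be a real 3-vector, and set 𝒰 = (A ⊗ B) · exp(−i H_α) · (C ⊗ D) and W = M† 𝒰 M. Then the multiset of eigenvalues (with multiplicity) of the matrix Wᵀ W is { e^{−2iλ_j(α)} : j = 1,…,4 }, where λ(α) = (α₁+α₂−α₃, α₁−α₂+α₃, −α₁+α₂+α₃, −α₁−α₂−α₃). (This justifies the method of computing the interaction content of a gate from the eigenvalues of 𝒰ᵀ𝒰 taken in the magic basis.) -/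
open Matrix Complex Real NormedSpace

noncomputable section

/-!
In the magic basis `H_α` is diagonal with eigenvalues `λ(α)`, so `M† exp(-i H_α) M` is the diagonal
matrix `D = diag(e^{-iλⱼ})`. The bilinear form `σ₂⊗σ₂` is preserved by `A ⊗ B` whenever
`det A = det B = 1` (since `Xᵀ σ₂ X = det X • σ₂`), and the magic basis turns it into the standard
bilinear form, so `M†(A⊗B)M` is complex orthogonal. Hence `W = Q₁ D Q₂` with `Qᵢᵀ Qᵢ = 1`, and
`Wᵀ W = Q₂ᵀ D² Q₂` has the same characteristic polynomial as `D²`.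
-/

open scoped Kronecker

section Orthogonal

variable {n R : Type*} [Fintype n] [DecidableEq n]

lemma conjTranspose_mul_mul_transpose_mul_self {M U J : Matrix n n ℂ} (hM : Mᴴ * M = 1)
    (hJ : Mᴴᵀ * Mᴴ = J) (hU : Uᵀ * J * U = J) : (Mᴴ * U * M)ᵀ * (Mᴴ * U * M) = 1 :=
  calc (Mᴴ * U * M)ᵀ * (Mᴴ * U * M) = Mᵀ * (Uᵀ * (Mᴴᵀ * Mᴴ) * U) * M := by
        simp only [transpose_mul, Matrix.mul_assoc]
    _ = Mᵀ * Mᴴᵀ * (Mᴴ * M) := by rw [hJ, hU, ← hJ]; simp only [Matrix.mul_assoc]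
    _ = 1 := by rw [← transpose_mul, hM, transpose_one, Matrix.one_mul]

lemma charpoly_transpose_mul_self_of_orthogonal [CommRing R] {P Q : Matrix n n R}
    (hP : Pᵀ * P = 1) (hQ : Qᵀ * Q = 1) (d : n → R) :
    ((P * diagonal d * Q)ᵀ * (P * diagonal d * Q)).charpoly =
      ∏ i, (Polynomial.X - Polynomial.C (d i ^ 2)) :=
  calc ((P * diagonal d * Q)ᵀ * (P * diagonal d * Q)).charpoly
      = (Qᵀ * (diagonal d * diagonal d * Q)).charpoly := by
        simp only [transpose_mul, diagonal_transpose, Matrix.mul_assoc]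
        rw [← Matrix.mul_assoc Pᵀ, hP, Matrix.one_mul]
    _ = (diagonal fun i => d i ^ 2).charpoly := by
        rw [charpoly_mul_comm, Matrix.mul_assoc, mul_eq_one_comm.mp hQ, Matrix.mul_one,
          diagonal_mul_diagonal]
        simp only [sq]
    _ = ∏ i, (Polynomial.X - Polynomial.C (d i ^ 2)) := charpoly_diagonal _

end Orthogonal

lemma kron_eq_submatrix_kronecker (A B : Matrix (Fin 2) (Fin 2) ℂ) :
    kron A B = (A ⊗ₖ B).submatrix finProdFinEquiv.symm finProdFinEquiv.symm :=
  rfl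

lemma kron_mul_kron (A B C D : Matrix (Fin 2) (Fin 2) ℂ) :
    kron A B * kron C D = kron (A * C) (B * D) := by
  simp only [kron_eq_submatrix_kronecker, submatrix_mul_equiv, mul_kronecker_mul]

lemma transpose_kron (A B : Matrix (Fin 2) (Fin 2) ℂ) : (kron A B)ᵀ = kron Aᵀ Bᵀ := by
  simp only [kron_eq_submatrix_kronecker, transpose_submatrix, kroneckerMap_transpose]

lemma transpose_mul_σ2_mul (A : Matrix (Fin 2) (Fin 2) ℂ) : Aᵀ * σ2 * A = A.det • σ2 := by
  ext i j
  fin_cases i <;> fin_cases j <;> simp [σ2, mul_apply, Fin.sum_univ_two, det_fin_two] <;> ring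

lemma transpose_kron_mul_kron_σ2_mul (A B : Matrix (Fin 2) (Fin 2) ℂ) :
    (kron A B)ᵀ * kron σ2 σ2 * kron A B = (A.det * B.det) • kron σ2 σ2 := by
  rw [transpose_kron, kron_mul_kron, kron_mul_kron, transpose_mul_σ2_mul, transpose_mul_σ2_mul]
  ext i j
  simp only [kron, of_apply, Matrix.smul_apply, smul_eq_mul]
  ring

def sqrtTwoMmag : Matrix (Fin 4) (Fin 4) ℂ :=
  !![0, 1, -I, 0; -I, 0, 0, 1; -I, 0, 0, -1; 0, 1, I, 0]

lemma Mmag_eq_smul : Mmag = ((√2 : ℝ) : ℂ)⁻¹ • sqrtTwoMmag := by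
  ext i j
  fin_cases i <;> fin_cases j <;> simp [Mmag, sqrtTwoMmag, div_eq_inv_mul]

lemma sqrtTwoMmag_conjTranspose_mul_self : sqrtTwoMmagᴴ * sqrtTwoMmag = (2 : ℂ) • 1 := by
  ext i j
  fin_cases i <;> fin_cases j <;> simp [sqrtTwoMmag, mul_apply, Fin.sum_univ_four] <;> ring

lemma sqrtTwoMmag_conjTranspose_transpose_mul :
    sqrtTwoMmagᴴᵀ * sqrtTwoMmagᴴ = -(2 : ℂ) • kron σ2 σ2 := by
  ext i j
  fin_cases i <;> fin_cases j <;>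
    simp [sqrtTwoMmag, kron, σ2, mul_apply, Fin.sum_univ_four] <;> ring

lemma sqrtTwoMmag_conjTranspose_mul_Hmat_mul (a : Fin 3 → ℝ) :
    sqrtTwoMmagᴴ * Hmat a * sqrtTwoMmag = (2 : ℂ) • diagonal (fun j => (lamv a j : ℂ)) := by
  ext i j
  fin_cases i <;> fin_cases j <;>
    simp [sqrtTwoMmag, Hmat, kron, σ1, σ2, σ3, lamv, mul_apply, Fin.sum_univ_four, diagonal] <;>
    ring_nf <;> simp only [Complex.I_sq] <;> ring

lemma ofReal_sqrt_two_inv_mul_self : ((√2 : ℝ) : ℂ)⁻¹ * ((√2 : ℝ) : ℂ)⁻¹ = 2⁻¹ := by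
  rw [← mul_inv, ← Complex.ofReal_mul, Real.mul_self_sqrt zero_le_two, Complex.ofReal_ofNat]

lemma star_ofReal_sqrt_two_inv : star ((√2 : ℝ) : ℂ)⁻¹ = ((√2 : ℝ) : ℂ)⁻¹ := by
  rw [star_inv₀, Complex.star_def, Complex.conj_ofReal]

lemma Mmag_conjTranspose_mul_mul (X : Matrix (Fin 4) (Fin 4) ℂ) :
    Mmagᴴ * X * Mmag = (2 : ℂ)⁻¹ • (sqrtTwoMmagᴴ * X * sqrtTwoMmag) := by
  simp only [Mmag_eq_smul, conjTranspose_smul, star_ofReal_sqrt_two_inv, Matrix.smul_mul,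
    Matrix.mul_smul, smul_smul, ofReal_sqrt_two_inv_mul_self]

lemma Mmag_conjTranspose_mul_self : Mmagᴴ * Mmag = 1 := by
  simpa [sqrtTwoMmag_conjTranspose_mul_self] using Mmag_conjTranspose_mul_mul 1

lemma Mmag_mul_conjTranspose : Mmag * Mmagᴴ = 1 :=
  mul_eq_one_comm.mp Mmag_conjTranspose_mul_self

lemma Mmag_conjTranspose_transpose_mul : Mmagᴴᵀ * Mmagᴴ = -kron σ2 σ2 := by
  simp only [Mmag_eq_smul, conjTranspose_smul, transpose_smul, star_ofReal_sqrt_two_inv,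
    Matrix.smul_mul, Matrix.mul_smul, smul_smul, sqrtTwoMmag_conjTranspose_transpose_mul]
  rw [← mul_assoc, ofReal_sqrt_two_inv_mul_self]
  norm_num

lemma Mmag_conjTranspose_mul_Hmat_mul (a : Fin 3 → ℝ) :
    Mmagᴴ * Hmat a * Mmag = diagonal (fun j => (lamv a j : ℂ)) := by
  rw [Mmag_conjTranspose_mul_mul, sqrtTwoMmag_conjTranspose_mul_Hmat_mul, smul_smul]
  norm_num

lemma Mmag_conjTranspose_mul_exp_mul (a : Fin 3 → ℝ) :
    Mmagᴴ * NormedSpace.exp (-(I • Hmat a)) * Mmag =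
      diagonal (fun j => Complex.exp (-(I * lamv a j))) := by
  have hMinv : Mmag⁻¹ = Mmagᴴ := inv_eq_right_inv Mmag_mul_conjTranspose
  have hMunit : IsUnit Mmag :=
    ⟨⟨Mmag, Mmagᴴ, Mmag_mul_conjTranspose, Mmag_conjTranspose_mul_self⟩, rfl⟩
  rw [← hMinv, ← Matrix.exp_conj' _ _ hMunit, hMinv, Matrix.mul_neg, Matrix.neg_mul,
    Matrix.mul_smul, Matrix.smul_mul, Mmag_conjTranspose_mul_Hmat_mul, ← diagonal_smul,
    diagonal_neg, Matrix.exp_diagonal]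
  congr 1
  funext j
  simp only [Pi.exp_def, ← Complex.exp_eq_exp_ℂ, Pi.smul_apply, smul_eq_mul]

lemma Mmag_conjTranspose_mul_kron_mul_orthogonal {A B : Matrix (Fin 2) (Fin 2) ℂ}
    (hA : A.det = 1) (hB : B.det = 1) :
    (Mmagᴴ * kron A B * Mmag)ᵀ * (Mmagᴴ * kron A B * Mmag) = 1 := by
  refine conjTranspose_mul_mul_transpose_mul_self Mmag_conjTranspose_mul_self
    Mmag_conjTranspose_transpose_mul ?_
  rw [Matrix.mul_neg, Matrix.neg_mul, transpose_kron_mul_kron_σ2_mul, hA, hB, mul_one, one_smul]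

theorem stmt18 (A B C D : Matrix (Fin 2) (Fin 2) ℂ)
    (hA : A ∈ Matrix.specialUnitaryGroup (Fin 2) ℂ)
    (hB : B ∈ Matrix.specialUnitaryGroup (Fin 2) ℂ)
    (hC : C ∈ Matrix.specialUnitaryGroup (Fin 2) ℂ)
    (hD : D ∈ Matrix.specialUnitaryGroup (Fin 2) ℂ)
    (α : Fin 3 → ℝ) :
    ((Mmagᴴ * (kron A B * NormedSpace.exp (-(I • Hmat α)) * kron C D) * Mmag)ᵀ *
        (Mmagᴴ * (kron A B * NormedSpace.exp (-(I • Hmat α)) * kron C D) * Mmag)).charpoly =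
      ∏ j : Fin 4,
        (Polynomial.X - Polynomial.C (Complex.exp (-(2 * I * (lamv α j))))) := by
  have det_eq_one {X : Matrix (Fin 2) (Fin 2) ℂ} (hX : X ∈ Matrix.specialUnitaryGroup (Fin 2) ℂ) :
      X.det = 1 := (Matrix.mem_specialUnitaryGroup_iff.mp hX).2
  have cancel (X : Matrix (Fin 4) (Fin 4) ℂ) : Mmag * (Mmagᴴ * X) = X := by
    rw [← Matrix.mul_assoc, Mmag_mul_conjTranspose, Matrix.one_mul]
  have hW : Mmagᴴ * (kron A B * NormedSpace.exp (-(I • Hmat α)) * kron C D) * Mmag =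
      (Mmagᴴ * kron A B * Mmag) * Matrix.diagonal (fun j => Complex.exp (-(I * lamv α j))) *
        (Mmagᴴ * kron C D * Mmag) := by
    rw [← Mmag_conjTranspose_mul_exp_mul]
    simp only [Matrix.mul_assoc, cancel]
  rw [hW, charpoly_transpose_mul_self_of_orthogonal
    (Mmag_conjTranspose_mul_kron_mul_orthogonal (det_eq_one hA) (det_eq_one hB))
    (Mmag_conjTranspose_mul_kron_mul_orthogonal (det_eq_one hC) (det_eq_one hD))]
  refine Finset.prod_congr rfl fun j _ => ?_
  rw [← Complex.exp_nat_mul]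
  ring_nf
end
end
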